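/- arXiv:1803.11108 — 3 statements merged into one kernel-verified Lean document; each statement's English description precedes it below -/
import Mathlib

section
/- For all real parameters α, β, γ, δ, the Jacobian determinant σ of the bilinear map θ satisfies σ(x,y) > 0 for every (x,y) in the closed unit square [0,1]² if and only if the four numbers β, δ, βγ − αδ and δ + βγ − β − αδ are all positive. -/
/-!
Since σ is affine, it agrees with the bilinear interpolation of its values at the four corners
of the square, which are β, δ, βγ − αδ and δ + βγ − β − αδ. Hence σ is positive on the square
exactly when it is positive at the corners.
-/

/-- The Jacobian determinant of the bilinear map θ, in its explicit affine form
σ(x,y) = β + (δ−β)x + (βγ − β − αδ)y. -/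
noncomputable def sigma (α β γ δ : ℝ) (x y : ℝ) : ℝ :=
  β + (δ - β) * x + (β * γ - β - α * δ) * y

lemma one_sub_mul_add_mul_pos {a b t : ℝ} (ha : 0 < a) (hb : 0 < b) (ht : t ∈ Set.Icc (0 : ℝ) 1) :
    0 < (1 - t) * a + t * b :=
  convex_Ioi (0 : ℝ) ha hb (sub_nonneg.2 ht.2) ht.1 (sub_add_cancel 1 t)

lemma sigma_eq_interpolation (α β γ δ x y : ℝ) :
    sigma α β γ δ x y =
      (1 - y) * ((1 - x) * β + x * δ) +
        y * ((1 - x) * (β * γ - α * δ) + x * (δ + β * γ - β - α * δ)) := by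
  unfold sigma
  ring

theorem stmt_1 (α β γ δ : ℝ) :
    (∀ x ∈ Set.Icc (0 : ℝ) 1, ∀ y ∈ Set.Icc (0 : ℝ) 1, 0 < sigma α β γ δ x y) ↔
      (0 < β ∧ 0 < δ ∧ 0 < β * γ - α * δ ∧ 0 < δ + β * γ - β - α * δ) := by
  constructor
  · intro h
    have h0 : (0 : ℝ) ∈ Set.Icc (0 : ℝ) 1 := Set.left_mem_Icc.2 zero_le_one
    have h1 : (1 : ℝ) ∈ Set.Icc (0 : ℝ) 1 := Set.right_mem_Icc.2 zero_le_one
    have h00 := h 0 h0 0 h0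
    have h10 := h 1 h1 0 h0
    have h01 := h 0 h0 1 h1
    have h11 := h 1 h1 1 h1
    simp only [sigma] at h00 h10 h01 h11
    exact ⟨by linarith, by linarith, by linarith, by linarith⟩
  · rintro ⟨hβ, hδ, hβγ, hsum⟩ x hx y hy
    rw [sigma_eq_interpolation]
    exact one_sub_mul_add_mul_pos (one_sub_mul_add_mul_pos hβ hδ hx)
      (one_sub_mul_add_mul_pos hβγ hsum hx) hy
end

section
/- Suppose the real parameters α, β, γ, δ satisfy β > 0, δ > 0, βγ − αδ > 0 and δ + βγ − β − αδ > 0 (i.e., the Jacobian determinant of θ is positive at the four vertices of the unit square, so that the quadrilateral with vertices (0,0),(1,0),(γ,δ),(α,β) is convex and positively oriented). Then the bilinear map θ is injective on the closed unit square [0,1]². -/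
/-!
For `p = (x, y)` and `q = (x', y')`, the map `θ` is affine in each variable separately, so
`θ p - θ q = (θ (x, y) - θ (x', y)) + (θ (x', y) - θ (x', y'))` is `M (p - q)`, where the columns of
`M` are `∂ₓθ`, which depends only on `y`, and `∂ᵧθ`, which depends only on `x'`; that is,
`M = Dθ (x', y)`. The Jacobian determinant of a bilinear map is affine, and here it is positive at
the four vertices, hence on the whole square. So `θ p = θ q` forces `p = q`.
-/

/-- The bilinear map θ sending the unit square to the quadrilateral with vertices
(0,0), (1,0), (α,β), (γ,δ). -/
noncomputable def theta (α β γ δ : ℝ) (p : ℝ × ℝ) : ℝ × ℝ :=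
  (p.1 + α * p.2 + (γ - 1 - α) * p.1 * p.2, β * p.2 + (δ - β) * p.1 * p.2)

open Set

/-- `det Dθ p`; its `xy`-terms cancel. -/
def thetaJacobian (α β γ δ : ℝ) (p : ℝ × ℝ) : ℝ :=
  β + (δ - β) * p.1 + (β * γ - β - α * δ) * p.2

/-- `a, b, c, d` are the values at `(0,0), (1,0), (0,1), (1,1)`. -/
lemma bilinearInterpolation_pos {a b c d x y : ℝ} (ha : 0 < a) (hb : 0 < b) (hc : 0 < c)
    (hd : 0 < d) (hx : x ∈ Icc (0 : ℝ) 1) (hy : y ∈ Icc (0 : ℝ) 1) :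
    0 < a + x * (b - a) + y * (c + x * (d - c) - (a + x * (b - a))) :=
  have interp_pos {u v t : ℝ} (hu : 0 < u) (hv : 0 < v) (ht : t ∈ Icc (0 : ℝ) 1) :
      0 < u + t * (v - u) :=
    (convex_Ioi (0 : ℝ)).add_smul_sub_mem hu hv ht
  interp_pos (interp_pos ha hb hx) (interp_pos hc hd hx) hy

lemma thetaJacobian_pos {α β γ δ : ℝ} (hβ : 0 < β) (hδ : 0 < δ) (h3 : 0 < β * γ - α * δ)
    (h4 : 0 < δ + β * γ - β - α * δ) {p : ℝ × ℝ} (hp : p ∈ Icc (0 : ℝ) 1 ×ˢ Icc (0 : ℝ) 1) :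
    0 < thetaJacobian α β γ δ p := by
  have := bilinearInterpolation_pos hβ hδ h3 h4 hp.1 hp.2
  unfold thetaJacobian
  linear_combination this

/-- Cramer's rule for `θ p - θ q = Dθ (q.1, p.2) (p - q)`. -/
lemma thetaJacobian_smul_sub_eq_zero {α β γ δ : ℝ} {p q : ℝ × ℝ}
    (h : theta α β γ δ p = theta α β γ δ q) :
    thetaJacobian α β γ δ (q.1, p.2) • (p - q) = 0 := by
  have h₁ := congrArg Prod.fst h
  have h₂ := congrArg Prod.snd h
  simp only [theta] at h₁ h₂
  ext
  · simp only [thetaJacobian, Prod.smul_fst, Prod.fst_sub, smul_eq_mul, Prod.fst_zero]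
    linear_combination (β + (δ - β) * q.1) * h₁ - (α + (γ - 1 - α) * q.1) * h₂
  · simp only [thetaJacobian, Prod.smul_snd, Prod.snd_sub, smul_eq_mul, Prod.snd_zero]
    linear_combination (-((δ - β) * p.2)) * h₁ + (1 + (γ - 1 - α) * p.2) * h₂

theorem stmt_2 (α β γ δ : ℝ)
    (hβ : 0 < β) (hδ : 0 < δ) (h3 : 0 < β * γ - α * δ)
    (h4 : 0 < δ + β * γ - β - α * δ) :
    Set.InjOn (theta α β γ δ) (Set.Icc (0 : ℝ) 1 ×ˢ Set.Icc (0 : ℝ) 1) := by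
  intro p hp q hq h
  have hJ : 0 < thetaJacobian α β γ δ (q.1, p.2) := thetaJacobian_pos hβ hδ h3 h4 ⟨hq.1, hp.2⟩
  exact sub_eq_zero.1 ((smul_eq_zero.1 (thetaJacobian_smul_sub_eq_zero h)).resolve_left hJ.ne')
end

section
/- Suppose the real parameters α, β, γ, δ satisfy β > 0, δ > 0, βγ − αδ > 0 and δ + βγ − β − αδ > 0. Then the image of the closed unit square [0,1]² under the bilinear map θ equals the convex hull in ℝ² of the four points (0,0), (1,0), (α,β), (γ,δ); thus θ maps the unit square onto the quadrilateral with these vertices. -/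
open Set

section Convexity

variable {E : Type*} [AddCommGroup E] [Module ℝ E]

theorem Convex.bilinear_interpolation_mem {s : Set E} (hs : Convex ℝ s) {a b c d : E}
    (ha : a ∈ s) (hb : b ∈ s) (hc : c ∈ s) (hd : d ∈ s) {x y : ℝ}
    (hx : x ∈ Icc (0 : ℝ) 1) (hy : y ∈ Icc (0 : ℝ) 1) :
    (1 - y) • ((1 - x) • a + x • b) + y • ((1 - x) • c + x • d) ∈ s := by
  have hx' : 0 ≤ 1 - x := sub_nonneg.2 hx.2
  have hy' : 0 ≤ 1 - y := sub_nonneg.2 hy.2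
  exact hs (hs ha hb hx' hx.1 (by ring)) (hs hc hd hx' hx.1 (by ring)) hy' hy.1 (by ring)

theorem IsLinearMap.le_of_mem_convexHull {f : E → ℝ} (hf : IsLinearMap ℝ f) {s : Set E}
    {c : ℝ} (h : ∀ q ∈ s, f q ≤ c) {p : E} (hp : p ∈ convexHull ℝ s) : f p ≤ c :=
  convexHull_min h (convex_halfSpace_le hf c) hp

end Convexity

theorem isLinearMap_linearForm (a b : ℝ) :
    IsLinearMap ℝ (fun q : ℝ × ℝ => a * q.1 + b * q.2) where
  map_add q r := by simp only [Prod.fst_add, Prod.snd_add]; ring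
  map_smul r q := by simp only [Prod.smul_fst, Prod.smul_snd, smul_eq_mul]; ring

theorem add_mul_pos_of_mem_Icc {a b y : ℝ} (h₀ : 0 < a) (h₁ : 0 < a + b)
    (hy : y ∈ Icc (0 : ℝ) 1) : 0 < a + b * y := by
  rcases hy.1.eq_or_lt with rfl | hy₀
  · simpa using h₀
  · rw [show a + b * y = (1 - y) * a + y * (a + b) by ring]
    exact add_pos_of_nonneg_of_pos (mul_nonneg (sub_nonneg.2 hy.2) h₀.le) (mul_pos hy₀ h₁)

theorem theta_eq_bilinear_interpolation (α β γ δ x y : ℝ) :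
    theta α β γ δ (x, y) = (1 - y) • ((1 - x) • ((0 : ℝ), (0 : ℝ)) + x • ((1 : ℝ), (0 : ℝ))) +
      y • ((1 - x) • (α, β) + x • (γ, δ)) := by
  simp only [theta, Prod.smul_mk, smul_eq_mul, Prod.mk_add_mk]
  exact Prod.ext (by ring) (by ring)

section Quadrilateral

variable {α β γ δ : ℝ}

theorem edge_inequalities_of_mem_convexHull (hβ : 0 < β) (hδ : 0 < δ)
    (h3 : 0 < β * γ - α * δ) (h4 : 0 < δ + β * γ - β - α * δ) {p : ℝ × ℝ}
    (hp : p ∈ convexHull ℝ ({((0 : ℝ), (0 : ℝ)), (1, 0), (α, β), (γ, δ)} : Set (ℝ × ℝ))) :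
    0 ≤ p.2 ∧ 0 ≤ β * p.1 - α * p.2 ∧ 0 ≤ δ - δ * p.1 + (γ - 1) * p.2 ∧
      (γ - α) * p.2 - (δ - β) * p.1 ≤ β * γ - α * δ := by
  have halfplane : ∀ a b c : ℝ, a * 0 + b * 0 ≤ c → a * 1 + b * 0 ≤ c → a * α + b * β ≤ c →
      a * γ + b * δ ≤ c → a * p.1 + b * p.2 ≤ c := by
    intro a b c h₀ h₁ h₂ h₃
    refine (isLinearMap_linearForm a b).le_of_mem_convexHull ?_ hp
    simpa only [mem_insert_iff, mem_singleton_iff, forall_eq_or_imp, forall_eq] using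
      ⟨h₀, h₁, h₂, h₃⟩
  refine ⟨?_, ?_, ?_, ?_⟩
  · linarith [halfplane 0 (-1) 0 (by norm_num) (by norm_num) (by linarith) (by linarith)]
  · linarith [halfplane (-β) α 0 (by norm_num) (by linarith) (by linarith) (by linarith)]
  · linarith [halfplane δ (-(γ - 1)) δ (by linarith) (by linarith) (by linarith) (by linarith)]
  · linarith [halfplane (-(δ - β)) (γ - α) (β * γ - α * δ)
      (by linarith) (by linarith) (by linarith) (by linarith)]

/-- Twice the signed area of the triangle `θ(0, y), θ(1, y), p`. -/
def signedArea (α β γ δ : ℝ) (p : ℝ × ℝ) (y : ℝ) : ℝ :=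
  (1 + (γ - 1 - α) * y) * (p.2 - β * y) - (δ - β) * y * (p.1 - α * y)

theorem exists_signedArea_eq_zero {p : ℝ × ℝ} (h₀ : 0 ≤ p.2)
    (h₁ : (γ - α) * p.2 - (δ - β) * p.1 ≤ β * γ - α * δ) :
    ∃ y ∈ Icc (0 : ℝ) 1, signedArea α β γ δ p y = 0 := by
  have hcont : ContinuousOn (signedArea α β γ δ p) (Icc 0 1) := by
    unfold signedArea; fun_prop
  have hzero : (0 : ℝ) ∈ Icc (signedArea α β γ δ p 1) (signedArea α β γ δ p 0) := by
    simp only [signedArea, mem_Icc]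
    constructor <;> linarith
  exact intermediate_value_Icc' zero_le_one hcont hzero

theorem exists_theta_eq_of_signedArea_eq_zero (hβ : 0 < β) (hδ : 0 < δ)
    (h3 : 0 < β * γ - α * δ) (h4 : 0 < δ + β * γ - β - α * δ) {p : ℝ × ℝ} {y : ℝ}
    (hy : y ∈ Icc (0 : ℝ) 1) (harea : signedArea α β γ δ p y = 0)
    (hleft : 0 ≤ β * p.1 - α * p.2) (hright : 0 ≤ δ - δ * p.1 + (γ - 1) * p.2) :
    ∃ x ∈ Icc (0 : ℝ) 1, theta α β γ δ (x, y) = p := by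
  have hK : 0 < β + (β * γ - α * δ - β) * y :=
    add_mul_pos_of_mem_Icc hβ (by linarith) hy
  have hG : 0 < δ + (β * γ - α * δ - β) * y :=
    add_mul_pos_of_mem_Icc hδ (by linarith) hy
  -- `β u - α v` vanishes on the edge `P₀P₂` and is `x` times the factor in `hK` at `θ(x, y)`.
  set x := (β * p.1 - α * p.2) / (β + (β * γ - α * δ - β) * y)
  have hxK : x * (β + (β * γ - α * δ - β) * y) = β * p.1 - α * p.2 :=
    div_mul_cancel₀ _ hK.ne'
  have hx0 : 0 ≤ x := div_nonneg hleft hK.le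
  clear_value x
  unfold signedArea at harea
  have htheta : theta α β γ δ (x, y) = p := by
    simp only [theta]
    refine Prod.ext (mul_left_cancel₀ hK.ne' ?_) (mul_left_cancel₀ hK.ne' ?_)
    · linear_combination (1 + (γ - 1 - α) * y) * hxK - α * harea
    · linear_combination (δ - β) * y * hxK - β * harea
  -- Similarly `δ - δ u + (γ - 1) v` vanishes on `P₁P₃` and is `1 - x` times the factor in `hG`.
  have hxG : (1 - x) * (δ + (β * γ - α * δ - β) * y) = δ - δ * p.1 + (γ - 1) * p.2 := by
    rw [← htheta]; simp only [theta]; ring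
  exact ⟨x, ⟨hx0, sub_nonneg.1 (nonneg_of_mul_nonneg_left (hxG ▸ hright) hG)⟩, htheta⟩

end Quadrilateral

theorem stmt_3 (α β γ δ : ℝ)
    (hβ : 0 < β) (hδ : 0 < δ) (h3 : 0 < β * γ - α * δ)
    (h4 : 0 < δ + β * γ - β - α * δ) :
    theta α β γ δ '' (Set.Icc (0 : ℝ) 1 ×ˢ Set.Icc (0 : ℝ) 1) =
      convexHull ℝ ({((0 : ℝ), (0 : ℝ)), (1, 0), (α, β), (γ, δ)} : Set (ℝ × ℝ)) := by
  apply Subset.antisymm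
  · rintro _ ⟨⟨x, y⟩, ⟨hx, hy⟩, rfl⟩
    rw [theta_eq_bilinear_interpolation]
    have hmem := subset_convexHull ℝ ({((0 : ℝ), (0 : ℝ)), (1, 0), (α, β), (γ, δ)} : Set (ℝ × ℝ))
    exact (convex_convexHull ℝ _).bilinear_interpolation_mem (hmem (by simp)) (hmem (by simp))
      (hmem (by simp)) (hmem (by simp)) hx hy
  · intro p hp
    obtain ⟨hbottom, hleft, hright, htop⟩ := edge_inequalities_of_mem_convexHull hβ hδ h3 h4 hp
    obtain ⟨y, hy, harea⟩ := exists_signedArea_eq_zero hbottom htop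
    obtain ⟨x, hx, rfl⟩ :=
      exists_theta_eq_of_signedArea_eq_zero hβ hδ h3 h4 hy harea hleft hright
    exact ⟨(x, y), ⟨hx, hy⟩, rfl⟩
end
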